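/- Let G be a finite simple split graph on n vertices with vertex partition into a clique Q with |Q| ≥ 2 and a nonempty stable set S, with Q totally ordered v_1 < v_2 < ... < v_r and partitioned into consecutive segments Q_l = {v_1,...,v_p}, Q_r = {v_q,...,v_r}, Q_t = Q \ (Q_l ∪ Q_r), such that every s ∈ S has neighborhood of one of the forms (i) {v_1,...,v_i} with i ≤ p, (ii) {v_j,...,v_r} with q ≤ j ≤ r, or (iii) {v_1,...,v_i} ∪ {v_j,...,v_r} with i ≤ p and q ≤ j ≤ r; let S_l, S_r, S_t be the sets of vertices of S of forms (i), (ii), (iii) respectively, and assume p = |N(S_l)| and |N(S_r)| = r - q + 1. If |S_l| ≥ |S_r|, then Δ(G) = n - |S_r| - 1. -/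

import Mathlib

/-! Basic definitions for edge coloring and split/comparability graphs. -/

variable {V : Type*}

/-- The degree of a vertex. -/
noncomputable def deg (G : SimpleGraph V) (x : V) : ℕ := (G.neighborSet x).ncard

/-- The maximum degree Δ(G). -/
noncomputable def maxDeg (G : SimpleGraph V) : ℕ := sSup (Set.range (deg G))

/-- A proper edge coloring: distinct edges sharing an endpoint get distinct colors. -/
def IsProperEdgeColoring (G : SimpleGraph V) (c : Sym2 V → ℕ) : Prop :=
  ∀ e ∈ G.edgeSet, ∀ f ∈ G.edgeSet, e ≠ f → (∃ x, x ∈ e ∧ x ∈ f) → c e ≠ c f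

/-- `G` has a proper edge coloring with `k` colors. -/
def HasProperEdgeColoring (G : SimpleGraph V) (k : ℕ) : Prop :=
  ∃ c : Sym2 V → ℕ, (∀ e ∈ G.edgeSet, c e < k) ∧ IsProperEdgeColoring G c

/-- The chromatic index χ'(G). -/
noncomputable def chromIndex (G : SimpleGraph V) : ℕ :=
  sInf {k | HasProperEdgeColoring G k}

/-- An edge coloring with colors `< k` is balanced if any two color classes
differ in cardinality by at most 1. -/
def BalancedEdgeColoring (G : SimpleGraph V) (c : Sym2 V → ℕ) (k : ℕ) : Prop :=
  ∀ i < k, ∀ j < k,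
    {e | e ∈ G.edgeSet ∧ c e = i}.ncard ≤ {e | e ∈ G.edgeSet ∧ c e = j}.ncard + 1

/-- A graph is overfull if it has an odd number `n` of vertices and
`m > (n - 1) * Δ / 2` edges. -/
def Overfull (G : SimpleGraph V) : Prop :=
  Odd (Nat.card V) ∧ (Nat.card V - 1) * maxDeg G < 2 * G.edgeSet.ncard

/-- A graph is neighborhood-overfull if the subgraph induced by the closed
neighborhood of some maximum-degree vertex is overfull. -/
def NeighborhoodOverfull (G : SimpleGraph V) : Prop :=
  ∃ x : V, deg G x = maxDeg G ∧ Overfull (G.induce (G.neighborSet x ∪ {x}))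

/-- A graph is subgraph-overfull if it has a subgraph of the same maximum degree
that is overfull. -/
def SubgraphOverfull (G : SimpleGraph V) : Prop :=
  ∃ H : G.Subgraph, maxDeg H.coe = maxDeg G ∧ Overfull H.coe

/-- A graph is saturated if it has an odd number of vertices and its complement
has exactly Δ(G)/2 edges. -/
def Saturated (G : SimpleGraph V) : Prop :=
  Odd (Nat.card V) ∧ 2 * (Gᶜ.edgeSet.ncard) = maxDeg G

/-- `Q`, `S` form a split partition of `G`: a partition of the vertices into a
clique `Q` and a stable set `S`. -/
def IsSplitPartition (G : SimpleGraph V) (Q S : Set V) : Prop :=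
  Q ∪ S = Set.univ ∧ Disjoint Q S ∧ G.IsClique Q ∧ ∀ a ∈ S, ∀ b ∈ S, ¬ G.Adj a b

/-- A split graph. -/
def IsSplit (G : SimpleGraph V) : Prop := ∃ Q S : Set V, IsSplitPartition G Q S

/-- A comparability graph: one admitting a transitive orientation of its edges,
i.e. the comparability graph of a strict partial order. -/
def IsComparability (G : SimpleGraph V) : Prop :=
  ∃ r : V → V → Prop, (∀ a, ¬ r a a) ∧ (∀ a b c, r a b → r b c → r a c) ∧
    (∀ a b, G.Adj a b ↔ (r a b ∨ r b a))

/-- Form (i): `N(s) = {v_1, …, v_i}` for some `1 ≤ i ≤ p`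
(vertices `v_1, …, v_r` being `v 0, …, v (r-1)`). -/
def FormL {r : ℕ} (G : SimpleGraph V) (v : Fin r → V) (p : ℕ) (s : V) : Prop :=
  ∃ i, 1 ≤ i ∧ i ≤ p ∧ G.neighborSet s = v '' {j : Fin r | (j : ℕ) < i}

/-- Form (ii): `N(s) = {v_j, …, v_r}` for some `q ≤ j ≤ r`. -/
def FormR {r : ℕ} (G : SimpleGraph V) (v : Fin r → V) (q : ℕ) (s : V) : Prop :=
  ∃ j, q ≤ j ∧ j ≤ r ∧ G.neighborSet s = v '' {k : Fin r | j ≤ (k : ℕ) + 1}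

/-- Form (iii): `N(s) = {v_1, …, v_i} ∪ {v_j, …, v_r}` for some `1 ≤ i ≤ p`,
`q ≤ j ≤ r`. -/
def FormT {r : ℕ} (G : SimpleGraph V) (v : Fin r → V) (p q : ℕ) (s : V) : Prop :=
  ∃ i j, 1 ≤ i ∧ i ≤ p ∧ q ≤ j ∧ j ≤ r ∧
    G.neighborSet s = v '' {k : Fin r | (k : ℕ) < i} ∪ v '' {k : Fin r | j ≤ (k : ℕ) + 1}

/-!
The first clique vertex `v 0` has maximum degree: it sees all of `Q` and exactly the vertices
of `S \ S_r`, so its degree is `n - |S_r| - 1`. A vertex of `S` has degree at most `|Q|`, and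
`S \ S_r` is nonempty once `S` is, because `|S_l| ≥ |S_r|`. A clique
vertex `v k` with `k + 1 < q` sees no vertex of `S_r`; one with `k + 1 ≥ q` sees no vertex of `S_l`,
hence only vertices of `S_r ∪ S_t`, and `|S_r| + |S_t| ≤ |S_l| + |S_t| ≤ |S \ S_r|`.
-/

lemma maxDeg_eq_deg_of_forall_deg_le {G : SimpleGraph V} {x₀ : V}
    (h : ∀ x, deg G x ≤ deg G x₀) : maxDeg G = deg G x₀ :=
  IsGreatest.csSup_eq ⟨⟨x₀, rfl⟩, by rintro _ ⟨x, rfl⟩; exact h x⟩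

namespace IsSplitPartition

variable {G : SimpleGraph V} {Q S : Set V}

lemma mem_or_mem (h : IsSplitPartition G Q S) (x : V) : x ∈ Q ∨ x ∈ S :=
  h.1.ge (Set.mem_univ x)

lemma card_eq [Fintype V] (h : IsSplitPartition G Q S) :
    Fintype.card V = Q.ncard + S.ncard := by
  rw [← Set.ncard_union_eq h.2.1, h.1, Set.ncard_univ, Nat.card_eq_fintype_card]

lemma neighborSet_subset_of_mem_stable (h : IsSplitPartition G Q S) {x : V} (hx : x ∈ S) :
    G.neighborSet x ⊆ Q := fun y hy =>
  (h.mem_or_mem y).resolve_right fun hyS => h.2.2.2 x hx y hyS hy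

lemma deg_le_of_mem_stable [Finite V] (h : IsSplitPartition G Q S) {x : V} (hx : x ∈ S) :
    deg G x ≤ Q.ncard :=
  Set.ncard_le_ncard (h.neighborSet_subset_of_mem_stable hx)

lemma neighborSet_eq_of_mem_clique (h : IsSplitPartition G Q S) {x : V} (hx : x ∈ Q) :
    G.neighborSet x = (Q \ {x}) ∪ (G.neighborSet x ∩ S) := by
  ext y
  constructor
  · intro hy
    rcases h.mem_or_mem y with hyQ | hyS
    · exact Or.inl ⟨hyQ, (G.ne_of_adj hy).symm⟩
    · exact Or.inr ⟨hy, hyS⟩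
  · rintro (⟨hyQ, hyx⟩ | ⟨hy, -⟩)
    · exact h.2.2.1 hx hyQ (Ne.symm hyx)
    · exact hy

lemma deg_of_mem_clique [Finite V] (h : IsSplitPartition G Q S) {x : V} (hx : x ∈ Q) :
    deg G x = Q.ncard - 1 + (G.neighborSet x ∩ S).ncard := calc
  deg G x = ((Q \ {x}) ∪ (G.neighborSet x ∩ S)).ncard :=
    congrArg Set.ncard (h.neighborSet_eq_of_mem_clique hx)
  _ = Q.ncard - 1 + (G.neighborSet x ∩ S).ncard := by
    rw [Set.ncard_union_eq (h.2.1.mono Set.sdiff_subset Set.inter_subset_right),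
      Set.ncard_sdiff_singleton_of_mem hx]

end IsSplitPartition

section Forms

variable {G : SimpleGraph V} {r : ℕ} {v : Fin r → V} {p q : ℕ} {s : V} {k : Fin r}

lemma FormL.one_le (h : FormL G v p s) : 1 ≤ p := by
  obtain ⟨i, hi, hip, -⟩ := h
  omega

lemma FormL.mem_of_val_eq_zero (h : FormL G v p s) (hk : (k : ℕ) = 0) :
    v k ∈ G.neighborSet s := by
  obtain ⟨i, hi, -, hN⟩ := h
  rw [hN]
  exact ⟨k, by simp only [Set.mem_ofPred_eq]; omega, rfl⟩

lemma FormL.notMem_of_le (hv : Function.Injective v) (h : FormL G v p s) (hk : p ≤ k) :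
    v k ∉ G.neighborSet s := by
  obtain ⟨i, -, hip, hN⟩ := h
  rw [hN, hv.mem_set_image, Set.mem_ofPred_eq]
  omega

lemma FormR.notMem_of_lt (hv : Function.Injective v) (h : FormR G v q s) (hk : (k : ℕ) + 1 < q) :
    v k ∉ G.neighborSet s := by
  obtain ⟨j, hqj, -, hN⟩ := h
  rw [hN, hv.mem_set_image, Set.mem_ofPred_eq]
  omega

lemma FormT.one_le (h : FormT G v p q s) : 1 ≤ p := by
  obtain ⟨i, j, hi, hip, -⟩ := h
  omega

lemma FormT.mem_of_val_eq_zero (h : FormT G v p q s) (hk : (k : ℕ) = 0) :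
    v k ∈ G.neighborSet s := by
  obtain ⟨i, j, hi, -, -, -, hN⟩ := h
  rw [hN]
  exact Or.inl ⟨k, by simp only [Set.mem_ofPred_eq]; omega, rfl⟩

lemma FormT.mem_of_val_add_one_eq (h : FormT G v p q s) (hk : (k : ℕ) + 1 = r) :
    v k ∈ G.neighborSet s := by
  obtain ⟨i, j, -, -, -, hjr, hN⟩ := h
  rw [hN]
  exact Or.inr ⟨k, by simp only [Set.mem_ofPred_eq]; omega, rfl⟩

lemma FormL.not_formR (hv : Function.Injective v) (hpq : p < q) (hr : 0 < r)
    (h : FormL G v p s) : ¬ FormR G v q s := fun hR =>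
  have := h.one_le
  hR.notMem_of_lt hv (k := ⟨0, hr⟩) (by simp only; omega) (h.mem_of_val_eq_zero rfl)

lemma FormT.not_formR (hv : Function.Injective v) (hpq : p < q) (hr : 0 < r)
    (h : FormT G v p q s) : ¬ FormR G v q s := fun hR =>
  have := h.one_le
  hR.notMem_of_lt hv (k := ⟨0, hr⟩) (by simp only; omega) (h.mem_of_val_eq_zero rfl)

lemma FormL.not_formT (hv : Function.Injective v) (hpq : p < q) (h : FormL G v p s) :
    ¬ FormT G v p q s := fun hT => by
  have ⟨_, j, _, _, hqj, hjr, _⟩ := hT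
  exact h.notMem_of_le hv (k := ⟨r - 1, by omega⟩) (by simp only; omega)
    (hT.mem_of_val_add_one_eq (by simp only; omega))

end Forms

section Partition

variable {G : SimpleGraph V} {r : ℕ} {v : Fin r → V} {p q : ℕ} {S : Set V}

lemma exists_formL_of_formR [Finite V]
    (hlr : {s ∈ S | FormR G v q s}.ncard ≤ {s ∈ S | FormL G v p s}.ncard)
    {s : V} (hs : s ∈ S) (hR : FormR G v q s) : ∃ t ∈ S, FormL G v p t := by
  have hSr : {s ∈ S | FormR G v q s}.Nonempty := ⟨s, hs, hR⟩
  exact Set.nonempty_of_ncard_ne_zero (hSr.ncard_pos.trans_le hlr).ne'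

lemma nonempty_not_formR [Finite V] (hv : Function.Injective v) (hpq : p < q) (hr : 0 < r)
    (hlr : {s ∈ S | FormR G v q s}.ncard ≤ {s ∈ S | FormL G v p s}.ncard)
    {s : V} (hs : s ∈ S) : {t ∈ S | ¬ FormR G v q t}.Nonempty := by
  by_cases hR : FormR G v q s
  · obtain ⟨t, ht, hL⟩ := exists_formL_of_formR hlr hs hR
    exact ⟨t, ht, hL.not_formR hv hpq hr⟩
  · exact ⟨s, hs, hR⟩

lemma neighborSet_inter_eq_of_val_eq_zero [Finite V] (hv : Function.Injective v) (hpq : p < q)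
    (hforms : ∀ s ∈ S, FormL G v p s ∨ FormR G v q s ∨ FormT G v p q s)
    (hlr : {s ∈ S | FormR G v q s}.ncard ≤ {s ∈ S | FormL G v p s}.ncard)
    {k : Fin r} (hk : (k : ℕ) = 0) :
    G.neighborSet (v k) ∩ S = {s ∈ S | ¬ FormR G v q s} := by
  ext s
  refine ⟨fun ⟨hadj, hs⟩ => ⟨hs, fun hR => ?_⟩, fun ⟨hs, hR⟩ => ⟨?_, hs⟩⟩
  · obtain ⟨t, -, hL⟩ := exists_formL_of_formR hlr hs hR
    have := hL.one_le
    exact hR.notMem_of_lt hv (by omega) (G.adj_symm hadj)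
  · rcases hforms s hs with hL | hR' | hT
    · exact G.adj_symm (hL.mem_of_val_eq_zero hk)
    · exact absurd hR' hR
    · exact G.adj_symm (hT.mem_of_val_eq_zero hk)

lemma ncard_neighborSet_inter_le [Finite V] (hv : Function.Injective v) (hpq : p < q)
    (hforms : ∀ s ∈ S, FormL G v p s ∨ FormR G v q s ∨ FormT G v p q s)
    (hlr : {s ∈ S | FormR G v q s}.ncard ≤ {s ∈ S | FormL G v p s}.ncard) (k : Fin r) :
    (G.neighborSet (v k) ∩ S).ncard ≤ {s ∈ S | ¬ FormR G v q s}.ncard := by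
  have hr : 0 < r := k.pos
  by_cases hk : (k : ℕ) + 1 < q
  · refine Set.ncard_le_ncard fun s ⟨hadj, hs⟩ => ⟨hs, fun hR => ?_⟩
    exact hR.notMem_of_lt hv hk (G.adj_symm hadj)
  have hsub : G.neighborSet (v k) ∩ S ⊆ {s ∈ S | FormR G v q s} ∪ {s ∈ S | FormT G v p q s} := by
    rintro s ⟨hadj, hs⟩
    rcases hforms s hs with hL | hR | hT
    · exact absurd (G.adj_symm hadj) (hL.notMem_of_le hv (by omega))
    · exact Or.inl ⟨hs, hR⟩
    · exact Or.inr ⟨hs, hT⟩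
  have hLT : Disjoint {s ∈ S | FormL G v p s} {s ∈ S | FormT G v p q s} :=
    Set.disjoint_left.2 fun _ hL hT => hL.2.not_formT hv hpq hT.2
  calc (G.neighborSet (v k) ∩ S).ncard
      ≤ ({s ∈ S | FormR G v q s} ∪ {s ∈ S | FormT G v p q s}).ncard := Set.ncard_le_ncard hsub
    _ ≤ {s ∈ S | FormR G v q s}.ncard + {s ∈ S | FormT G v p q s}.ncard := Set.ncard_union_le _ _
    _ ≤ {s ∈ S | FormL G v p s}.ncard + {s ∈ S | FormT G v p q s}.ncard :=
      Nat.add_le_add_right hlr _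
    _ = ({s ∈ S | FormL G v p s} ∪ {s ∈ S | FormT G v p q s}).ncard :=
      (Set.ncard_union_eq hLT).symm
    _ ≤ {s ∈ S | ¬ FormR G v q s}.ncard := Set.ncard_le_ncard <| Set.union_subset
      (fun s hs => ⟨hs.1, hs.2.not_formR hv hpq hr⟩) (fun s hs => ⟨hs.1, hs.2.not_formR hv hpq hr⟩)

end Partition

theorem maxDeg_eq_card_sub_Sr_general
    [Fintype V] (G : SimpleGraph V) (Q S : Set V)
    (hsplit : IsSplitPartition G Q S)
    (r : ℕ) (v : Fin r → V) (hv : Function.Injective v) (hvQ : Set.range v = Q)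
    (p q : ℕ) (hpq : p < q)
    (hforms : ∀ s ∈ S, FormL G v p s ∨ FormR G v q s ∨ FormT G v p q s)
    (Sl Sr : Set V)
    (hSl : Sl = {s ∈ S | FormL G v p s})
    (hSr : Sr = {s ∈ S | FormR G v q s})
    (hQ2 : 2 ≤ Q.ncard)
    (hlr : Sr.ncard ≤ Sl.ncard) :
    maxDeg G = Fintype.card V - Sr.ncard - 1 := by
  subst hSl hSr
  have hQr : Q.ncard = r := by rw [← hvQ, Set.ncard_range_of_injective hv, Nat.card_fin]
  have hr : 0 < r := by omega
  have hv₀ : v ⟨0, hr⟩ ∈ Q := hvQ ▸ Set.mem_range_self _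
  have hdeg₀ : deg G (v ⟨0, hr⟩) = r - 1 + {s ∈ S | ¬ FormR G v q s}.ncard := by
    rw [hsplit.deg_of_mem_clique hv₀, hQr,
      neighborSet_inter_eq_of_val_eq_zero hv hpq hforms hlr rfl]
  have hle : ∀ x, deg G x ≤ deg G (v ⟨0, hr⟩) := by
    intro x
    rcases hsplit.mem_or_mem x with hx | hx
    · obtain ⟨k, rfl⟩ := hvQ ▸ hx
      have := ncard_neighborSet_inter_le hv hpq hforms hlr k
      rw [hsplit.deg_of_mem_clique hx, hdeg₀, hQr]
      omega
    · have := hsplit.deg_le_of_mem_stable hx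
      have := (nonempty_not_formR hv hpq hr hlr hx).ncard_pos
      omega
  have hS : {s ∈ S | FormR G v q s}.ncard + {s ∈ S | ¬ FormR G v q s}.ncard = S.ncard :=
    Set.ncard_inter_add_ncard_sdiff_eq_ncard S {s | FormR G v q s}
  rw [maxDeg_eq_deg_of_forall_deg_le hle, hdeg₀, hsplit.card_eq, hQr]
  omega

/-- In a split graph on `n` vertices with the
split-comparability structure, `|Q| ≥ 2`, `S` nonempty and `|S_l| ≥ |S_r|`,
the maximum degree satisfies `Δ(G) = n - |S_r| - 1`. -/
theorem maxDeg_eq_card_sub_Sr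
    [Fintype V] (G : SimpleGraph V) (Q S : Set V)
    (hsplit : IsSplitPartition G Q S)
    (r : ℕ) (v : Fin r → V) (hv : Function.Injective v) (hvQ : Set.range v = Q)
    (p q : ℕ) (hpr : p ≤ r) (hpq : p < q) (hqr : q ≤ r + 1)
    (hforms : ∀ s ∈ S, FormL G v p s ∨ FormR G v q s ∨ FormT G v p q s)
    (Sl Sr St : Set V)
    (hSl : Sl = {s ∈ S | FormL G v p s})
    (hSr : Sr = {s ∈ S | FormR G v q s})
    (hSt : St = {s ∈ S | FormT G v p q s})
    (hNSl : (⋃ s ∈ Sl, G.neighborSet s).ncard = p)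
    (hNSr : (⋃ s ∈ Sr, G.neighborSet s).ncard = r + 1 - q)
    (hQ2 : 2 ≤ Q.ncard) (hSne : S.Nonempty)
    (hlr : Sr.ncard ≤ Sl.ncard) :
    maxDeg G = Fintype.card V - Sr.ncard - 1 :=
  maxDeg_eq_card_sub_Sr_general G Q S hsplit r v hv hvQ p q hpq hforms Sl Sr hSl hSr hQ2 hlr
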